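/- arXiv:0910.4807 — 5 statements merged into one kernel-verified Lean document; each statement's English description precedes it below -/
import Mathlib

section
/- Let C be a conic with focus a and directrix L (focus-directrix definition with eccentricity e), let p be a point on C, let T be the tangent line to C at p, and suppose T meets L at a point l. Then the angle ∠pal is a right angle. -/
open EuclideanGeometry InnerProductSpace

/-!
With the focus at the origin and the directrix `ℓ q = -d` for a linear functional `ℓ`, the
squared conic equation reads `‖q‖² = e² (ℓ q + d)²`. Differentiating along a curve in the conic
gives `⟪p, w⟫ = e² (ℓ p + d) ℓ w` for its velocity `w` at `p`. For `l = p + s w` this yields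
`⟪p, l⟫ = e² (ℓ p + d) (ℓ p + d + s ℓ w) = e² (ℓ p + d) (ℓ l + d)`, which vanishes on the directrix.
-/

theorem EuclideanSpace.infDist_setOf_apply_eq {ι : Type*} [Fintype ι] [DecidableEq ι]
    (x : EuclideanSpace ℝ ι) (i : ι) (c : ℝ) :
    Metric.infDist x {q : EuclideanSpace ℝ ι | q i = c} = |x i - c| := by
  have hfoot : x - (x i - c) • EuclideanSpace.single i 1 ∈ {q : EuclideanSpace ℝ ι | q i = c} := by
    simp
  refine le_antisymm ?_ ((Metric.le_infDist ⟨_, hfoot⟩).2 fun q (hq : q i = c) => ?_)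
  · calc Metric.infDist x _ ≤ dist x (x - (x i - c) • EuclideanSpace.single i 1) :=
          Metric.infDist_le_dist_of_mem hfoot
      _ = |x i - c| := by simp [norm_smul]
  · simpa [hq, Real.dist_eq] using PiLp.dist_apply_le x q i

section FocalConic

variable {E : Type*} [NormedAddCommGroup E] [InnerProductSpace ℝ E]
  (ℓ : StrongDual ℝ E) {k d : ℝ}

theorem inner_eq_of_hasDerivAt_of_norm_sq_eq {γ : ℝ → E} {w : E} {t₀ : ℝ}
    (hγ : ∀ t, ‖γ t‖ ^ 2 = k * (ℓ (γ t) + d) ^ 2) (hderiv : HasDerivAt γ w t₀) :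
    ⟪γ t₀, w⟫_ℝ = k * (ℓ (γ t₀) + d) * ℓ w := by
  have hrhs : HasDerivAt (fun t => k * (ℓ (γ t) + d) ^ 2) (k * (2 * (ℓ (γ t₀) + d) * ℓ w)) t₀ := by
    simpa using (((ℓ.hasFDerivAt.comp_hasDerivAt t₀ hderiv).add_const d).pow 2).const_mul k
  have hlhs := hderiv.norm_sq
  simp only [hγ] at hlhs
  linarith [hlhs.unique hrhs]

theorem inner_add_smul_eq_zero_of_norm_sq_eq {p w : E} {s : ℝ}
    (hp : ‖p‖ ^ 2 = k * (ℓ p + d) ^ 2) (hpw : ⟪p, w⟫_ℝ = k * (ℓ p + d) * ℓ w)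
    (hl : ℓ (p + s • w) = -d) :
    ⟪p, p + s • w⟫_ℝ = 0 := by
  rw [map_add, map_smul, smul_eq_mul] at hl
  rw [inner_add_right, real_inner_smul_right, real_inner_self_eq_norm_sq, hp, hpw]
  linear_combination k * (ℓ p + d) * hl

end FocalConic

theorem conic_tangent_meets_directrix_right_angle_general
    (e d : ℝ)
    (a p l : EuclideanSpace ℝ (Fin 2)) (ha : a = 0)
    (γ : ℝ → EuclideanSpace ℝ (Fin 2)) (t₀ : ℝ) (w : EuclideanSpace ℝ (Fin 2))
    (hγp : γ t₀ = p) (hderiv : HasDerivAt γ w t₀)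
    (hγ : ∀ t, dist (γ t) a =
      e * Metric.infDist (γ t) {q : EuclideanSpace ℝ (Fin 2) | q 1 = -d})
    (hl₁ : ∃ s : ℝ, l = p + s • w)
    (hl₂ : l 1 = -d) :
    ∠ p a l = Real.pi / 2 := by
  subst ha hγp
  obtain ⟨s, rfl⟩ := hl₁
  have hconic : ∀ t, ‖γ t‖ ^ 2 = e ^ 2 * (EuclideanSpace.proj 1 (γ t) + d) ^ 2 := fun t => by
    rw [← dist_zero_right, hγ t, EuclideanSpace.infDist_setOf_apply_eq, sub_neg_eq_add, mul_pow,
      sq_abs]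
    rfl
  have horth := inner_add_smul_eq_zero_of_norm_sq_eq _ (hconic t₀)
    (inner_eq_of_hasDerivAt_of_norm_sq_eq _ hconic hderiv) hl₂
  rw [angle, vsub_eq_sub, vsub_eq_sub, sub_zero, sub_zero]
  exact (InnerProductGeometry.inner_eq_zero_iff_angle_eq_pi_div_two _ _).1 horth

/-- The tangent to a focus-directrix conic at a point `p` meets the directrix `L` at a
point `l` such that `∠ p a l` is a right angle.  The conic has focus `a` (not on `L`),
directrix `L = {q | q 1 = -d}`, eccentricity `e > 0`; the tangent at `p` is encoded by a
differentiable curve `γ` lying in the conic with `γ t₀ = p` and nonzero velocity `w`;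
`l` is the point where the tangent line `{p + s • w}` meets `L`. -/
theorem conic_tangent_meets_directrix_right_angle
    (e d : ℝ) (he : 0 < e) (hd : 0 < d)
    (a p l : EuclideanSpace ℝ (Fin 2)) (ha : a = 0) (hpa : p ≠ a)
    (γ : ℝ → EuclideanSpace ℝ (Fin 2)) (t₀ : ℝ) (w : EuclideanSpace ℝ (Fin 2))
    (hγp : γ t₀ = p) (hw : w ≠ 0) (hderiv : HasDerivAt γ w t₀)
    (hγ : ∀ t, dist (γ t) a =
      e * Metric.infDist (γ t) {q : EuclideanSpace ℝ (Fin 2) | q 1 = -d})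
    (hl₁ : ∃ s : ℝ, l = p + s • w)
    (hl₂ : l 1 = -d) :
    ∠ p a l = Real.pi / 2 :=
  conic_tangent_meets_directrix_right_angle_general e d a p l ha γ t₀ w hγp hderiv hγ hl₁ hl₂
end

section
/- Let an ellipse have center C, semi-axes AC and BC. Let P be a point on the ellipse, DK the diameter through C parallel to the tangent at P, and F the foot of the perpendicular from P to line DK. Then PF·CK = AC·BC, where CK is the semi-diameter along DK. -/
/-!
Differentiating `ellipseForm a b (γ t) (γ t) = 1` shows that the tangent direction `w` at `P`,
hence also `K`, is conjugate to `P` for the polar form `B = ellipseForm a b` of the ellipse. For two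
conjugate points of the ellipse the Gram identity
`B(P,P) B(K,K) - B(P,K)² = (det[P K] / ab)²` gives `|det[P K]| = ab`. On the other hand the
distance from `P` to the line `CK`, times `CK`, is the area `|det[P K]|` of the parallelogram
spanned by `CP` and `CK`.
-/

open Metric

theorem Orientation.infDist_line_mul_norm {E : Type*} [NormedAddCommGroup E]
    [InnerProductSpace ℝ E] [Fact (Module.finrank ℝ E = 2)] (o : Orientation ℝ E (Fin 2))
    (x w : E) (hw : w ≠ 0) :
    infDist x {q | ∃ s : ℝ, q = s • w} * ‖w‖ = |o.areaForm x w| := by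
  have hw' : 0 < ‖w‖ := norm_pos_iff.2 hw
  have hshift (c : ℝ) : o.areaForm (x - c • w) w = o.areaForm x w := by
    simp [o.areaForm_apply_self]
  apply le_antisymm
  · set c : ℝ := inner ℝ w x / ‖w‖ ^ 2 with hc
    have horth : inner ℝ (x - c • w) w = 0 := by
      rw [inner_sub_left, real_inner_smul_left, real_inner_self_eq_norm_sq, real_inner_comm, hc,
        div_mul_cancel₀ _ (by positivity), sub_self]
    calc infDist x {q | ∃ s : ℝ, q = s • w} * ‖w‖ ≤ dist x (c • w) * ‖w‖ :=
          mul_le_mul_of_nonneg_right (infDist_le_dist_of_mem ⟨c, rfl⟩) hw'.le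
      _ = |o.areaForm x w| := by
          rw [dist_eq_norm, ← o.abs_areaForm_of_orthogonal horth, hshift]
  · have hne : {q : E | ∃ s : ℝ, q = s • w}.Nonempty := ⟨0, 0, (zero_smul ℝ w).symm⟩
    rw [← div_le_iff₀ hw', le_infDist hne]
    rintro _ ⟨c, rfl⟩
    rw [div_le_iff₀ hw', dist_eq_norm, ← hshift c]
    exact o.abs_areaForm_le _ _

theorem EuclideanSpace.infDist_line_mul_norm (x w : EuclideanSpace ℝ (Fin 2)) (hw : w ≠ 0) :
    infDist x {q | ∃ s : ℝ, q = s • w} * ‖w‖ = |x 0 * w 1 - x 1 * w 0| := by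
  let b := EuclideanSpace.basisFun (Fin 2) ℝ
  let o := b.toBasis.orientation
  rw [o.infDist_line_mul_norm x w hw, o.areaForm_to_volumeForm, o.volumeForm_robust' b,
    Module.Basis.det_apply, Matrix.det_fin_two]
  simp [b, Module.Basis.toMatrix_apply, mul_comm]

noncomputable def ellipseForm (a b : ℝ) (p q : EuclideanSpace ℝ (Fin 2)) : ℝ :=
  p 0 * q 0 / a ^ 2 + p 1 * q 1 / b ^ 2

section ellipseForm

variable {a b : ℝ}

theorem ellipseForm_self (p : EuclideanSpace ℝ (Fin 2)) :
    ellipseForm a b p p = (p 0 / a) ^ 2 + (p 1 / b) ^ 2 := by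
  simp only [ellipseForm]
  ring

theorem ellipseForm_smul_right (s : ℝ) (p q : EuclideanSpace ℝ (Fin 2)) :
    ellipseForm a b p (s • q) = s * ellipseForm a b p q := by
  simp only [ellipseForm, PiLp.smul_apply, smul_eq_mul]
  ring

theorem hasDerivAt_ellipseForm_self {γ : ℝ → EuclideanSpace ℝ (Fin 2)}
    {w : EuclideanSpace ℝ (Fin 2)} {t : ℝ} (hγ : HasDerivAt γ w t) :
    HasDerivAt (fun t ↦ ellipseForm a b (γ t) (γ t)) (2 * ellipseForm a b (γ t) w) t := by
  have hcoord (i : Fin 2) : HasDerivAt (fun t ↦ γ t i) (w i) t := by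
    simpa [Function.comp_def] using (EuclideanSpace.proj i).hasFDerivAt.comp_hasDerivAt t hγ
  refine ((((hcoord 0).mul (hcoord 0)).div_const (a ^ 2)).add
    (((hcoord 1).mul (hcoord 1)).div_const (b ^ 2))).congr_deriv ?_
  simp only [ellipseForm]
  ring

theorem ellipseForm_eq_zero_of_hasDerivAt {γ : ℝ → EuclideanSpace ℝ (Fin 2)}
    {w : EuclideanSpace ℝ (Fin 2)} {t c : ℝ} (hlevel : ∀ t, ellipseForm a b (γ t) (γ t) = c)
    (hγ : HasDerivAt γ w t) : ellipseForm a b (γ t) w = 0 := by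
  have hconst : HasDerivAt (fun t ↦ ellipseForm a b (γ t) (γ t)) 0 t := by
    simpa only [hlevel] using hasDerivAt_const t c
  linarith [(hasDerivAt_ellipseForm_self hγ).unique hconst]

theorem ellipseForm_self_mul_self_sub_sq (ha : a ≠ 0) (hb : b ≠ 0)
    (p q : EuclideanSpace ℝ (Fin 2)) :
    ellipseForm a b p p * ellipseForm a b q q - ellipseForm a b p q ^ 2 =
      ((p 0 * q 1 - p 1 * q 0) / (a * b)) ^ 2 := by
  simp only [ellipseForm]
  field_simp
  ring

theorem abs_cross_eq_of_ellipseForm_eq_zero (ha : 0 < a) (hb : 0 < b)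
    {p q : EuclideanSpace ℝ (Fin 2)}
    (hp : ellipseForm a b p p = 1) (hq : ellipseForm a b q q = 1) (hpq : ellipseForm a b p q = 0) :
    |p 0 * q 1 - p 1 * q 0| = a * b := by
  have h := ellipseForm_self_mul_self_sub_sq ha.ne' hb.ne' p q
  rw [hp, hq, hpq, div_pow] at h
  rw [← abs_of_pos (mul_pos ha hb), ← sq_eq_sq_iff_abs_eq_abs]
  field_simp at h
  linarith

end ellipseForm

/-- Conjugate-diameter lemma.  The ellipse has center `C = 0` and semi-axes
`AC, BC > 0`; `P` is a point on it.  The tangent at `P` is encoded by a differentiable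
curve `γ` in the ellipse with `γ t₀ = P` and nonzero velocity `w`.  `K` is an endpoint
of the diameter `DK` through the center parallel to the tangent at `P` (so `K` is on the
ellipse and on the line through `0` with direction `w`), and `PF` is the distance from
`P` to the line `DK`.  Then `PF · CK = AC · BC`. -/
theorem ellipse_conjugate_diameter_area
    (AC BC : ℝ) (hAC : 0 < AC) (hBC : 0 < BC)
    (P K : EuclideanSpace ℝ (Fin 2))
    (hP : (P 0 / AC) ^ 2 + (P 1 / BC) ^ 2 = 1)
    (γ : ℝ → EuclideanSpace ℝ (Fin 2)) (t₀ : ℝ) (w : EuclideanSpace ℝ (Fin 2))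
    (hγp : γ t₀ = P) (hw : w ≠ 0) (hderiv : HasDerivAt γ w t₀)
    (hγ : ∀ t, (γ t 0 / AC) ^ 2 + (γ t 1 / BC) ^ 2 = 1)
    (hK₁ : (K 0 / AC) ^ 2 + (K 1 / BC) ^ 2 = 1)
    (hK₂ : ∃ s : ℝ, K = s • w) :
    Metric.infDist P {q : EuclideanSpace ℝ (Fin 2) | ∃ s : ℝ, q = s • w} * dist (0 : EuclideanSpace ℝ (Fin 2)) K
      = AC * BC := by
  obtain ⟨s, rfl⟩ := hK₂
  simp only [← ellipseForm_self] at hP hγ hK₁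
  have hconj : ellipseForm AC BC P (s • w) = 0 := by
    rw [ellipseForm_smul_right, ← hγp, ellipseForm_eq_zero_of_hasDerivAt hγ hderiv, mul_zero]
  calc infDist P {q | ∃ s : ℝ, q = s • w} * dist 0 (s • w)
        = |s| * (infDist P {q | ∃ s : ℝ, q = s • w} * ‖w‖) := by
          rw [dist_zero_left, norm_smul, Real.norm_eq_abs]
          ring
    _ = |P 0 * (s • w) 1 - P 1 * (s • w) 0| := by
          rw [EuclideanSpace.infDist_line_mul_norm P w hw, ← abs_mul]
          simp only [PiLp.smul_apply, smul_eq_mul]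
          congr 1
          ring
    _ = AC * BC := abs_cross_eq_of_ellipseForm_eq_zero hAC hBC hP hK₁ hconj
end

section
/- Let v : ℝ → ℝ and suppose for each N the telescoping identity Σ_{i=1}^{N} (v(K_i)² − v(K_{i−1})²) = v(K_N)² − v(K_0)² holds; moreover 2·v(K_{i−1})(v(K_i) − v(K_{i−1})) = (v(K_i)² − v(K_{i−1})²) − (v(K_i) − v(K_{i−1}))². Conclude: for an orbit under a central acceleration m/r² directed at a fixed point S, the quantity v(r)² − 2m/r is conserved, i.e., v(r)² − 2m/r = v(r₀)² − 2m/r₀ for all attained r. -/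
open scoped RealInnerProductSpace

variable {F : Type*} [NormedAddCommGroup F] [InnerProductSpace ℝ F]

theorem HasDerivAt.norm {u : ℝ → F} {u' : F} {t : ℝ} (hu : HasDerivAt u u' t) (h0 : u t ≠ 0) :
    HasDerivAt (‖u ·‖) (⟪u t, u'⟫ / ‖u t‖) t := by
  have hpos : 0 < ‖u t‖ := norm_pos_iff.mpr h0
  have hsqrt := hu.norm_sq.sqrt (by positivity)
  simp only [Real.sqrt_sq (norm_nonneg _)] at hsqrt
  convert hsqrt using 1
  field_simp

/-- With `r = dist γ S`, the kinetic term contributes `2⟪γ', γ''⟫ = -2m⟪γ', γ - S⟫ / r³` and the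
potential term `-2m/r` contributes `2m r' / r² = 2m⟪γ - S, γ'⟫ / r³`: they cancel. -/
theorem hasDerivAt_inverse_square_energy {m : ℝ} {S : F} {γ g : ℝ → F} {t : ℝ}
    (hne : γ t ≠ S) (hvel : HasDerivAt γ (g t) t)
    (hacc : HasDerivAt g ((m / ‖S - γ t‖ ^ 3) • (S - γ t)) t) :
    HasDerivAt (fun s ↦ ‖g s‖ ^ 2 - 2 * m / dist (γ s) S) 0 t := by
  have hr : dist (γ t) S ≠ 0 := dist_ne_zero.mpr hne
  have hdist : HasDerivAt (fun s ↦ dist (γ s) S) (⟪γ t - S, g t⟫ / dist (γ t) S) t := by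
    simpa only [dist_eq_norm] using (hvel.sub_const S).norm (sub_ne_zero.mpr hne)
  refine (hacc.norm_sq.fun_sub ((hasDerivAt_const t (2 * m)).fun_div hdist hr)).congr_deriv ?_
  rw [← neg_sub (γ t) S, norm_neg, ← dist_eq_norm, inner_smul_right, inner_neg_right,
    real_inner_comm (γ t - S)]
  field_simp
  ring

/-- Conservation of energy for an inverse-square central force.  An object with
trajectory `γ` moves subject only to an acceleration of magnitude `m/r²` directed at
the fixed point `S`, where `r = dist(γ t, S)`: its velocity `g` satisfies
`g' t = (m / ‖S − γ t‖³) • (S − γ t)`.  Then the quantity `v² − 2m/r` is conserved: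
`‖g t‖² − 2m/dist(γ t, S) = ‖g 0‖² − 2m/dist(γ 0, S)` for all `t`. -/
theorem inverse_square_energy_conservation
    (m : ℝ) (S : EuclideanSpace ℝ (Fin 2))
    (γ g : ℝ → EuclideanSpace ℝ (Fin 2))
    (hne : ∀ t, γ t ≠ S)
    (hvel : ∀ t, HasDerivAt γ (g t) t)
    (hacc : ∀ t, HasDerivAt g ((m / ‖S - γ t‖ ^ 3) • (S - γ t)) t) :
    ∀ t : ℝ, ‖g t‖ ^ 2 - 2 * m / dist (γ t) S = ‖g 0‖ ^ 2 - 2 * m / dist (γ 0) S := by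
  intro t
  have hE s := hasDerivAt_inverse_square_energy (hne s) (hvel s) (hacc s)
  exact is_const_of_deriv_eq_zero (fun s ↦ (hE s).differentiableAt) (fun s ↦ (hE s).deriv) t 0
end

section
/- Suppose constants m > 0, Q > 0, C ∈ ℝ satisfy C = v₀² − 2m/r₀ and Q = v₀²r₀²·sin²α₀ for some r₀ > 0, v₀ > 0, α₀. Then QC + m² ≥ 0. Moreover QC + m² ≥ (r₀v₀² − m)² when sin²α₀ = 1, and in general if C < 0 then QC + m² ≥ (r₀v₀² − m)² ≥ 0. -/
/-!
With `s = sin²α₀` and `X = r₀v₀²`, clearing the denominator `r₀` gives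
`QC + m² = s·(X − m)² + (1 − s)·m²`, a convex combination of two squares. When `C < 0`,
i.e. `0 ≤ X < 2m`, the first square is the smaller one, so the combination dominates it.
-/

theorem orbit_discriminant_eq {K : Type*} [Field K] {r : K} (hr : r ≠ 0) (m v s : K) :
    v ^ 2 * r ^ 2 * s * (v ^ 2 - 2 * m / r) + m ^ 2 =
      s * (r * v ^ 2 - m) ^ 2 + (1 - s) * m ^ 2 := by
  field_simp
  ring

theorem le_convex_combo_of_le {s a b : ℝ} (hs : s ≤ 1) (hab : a ≤ b) :
    a ≤ s * a + (1 - s) * b := by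
  nlinarith

theorem sub_sq_le_sq_of_nonneg_of_le_two_mul {x m : ℝ} (hx : 0 ≤ x) (hxm : x ≤ 2 * m) :
    (x - m) ^ 2 ≤ m ^ 2 := by
  nlinarith

theorem orbit_discriminant_nonneg_general
    (m r₀ v₀ α₀ C Q : ℝ) (hr₀ : 0 < r₀)
    (hC : C = v₀ ^ 2 - 2 * m / r₀)
    (hQ : Q = v₀ ^ 2 * r₀ ^ 2 * Real.sin α₀ ^ 2) :
    Q * C + m ^ 2 ≥ 0 ∧
    (Real.sin α₀ ^ 2 = 1 → Q * C + m ^ 2 ≥ (r₀ * v₀ ^ 2 - m) ^ 2) ∧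
    (C < 0 → Q * C + m ^ 2 ≥ (r₀ * v₀ ^ 2 - m) ^ 2 ∧ (r₀ * v₀ ^ 2 - m) ^ 2 ≥ 0) := by
  have key : Q * C + m ^ 2 =
      Real.sin α₀ ^ 2 * (r₀ * v₀ ^ 2 - m) ^ 2 + (1 - Real.sin α₀ ^ 2) * m ^ 2 := by
    rw [hQ, hC, orbit_discriminant_eq hr₀.ne']
  have hs : Real.sin α₀ ^ 2 ≤ 1 := Real.sin_sq_le_one α₀
  refine ⟨?_, fun h => by rw [key, h, one_mul, sub_self, zero_mul, add_zero], fun hCneg => ⟨?_, sq_nonneg _⟩⟩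
  · rw [key]
    exact add_nonneg (mul_nonneg (sq_nonneg _) (sq_nonneg _))
      (mul_nonneg (sub_nonneg.2 hs) (sq_nonneg _))
  · have hX : r₀ * v₀ ^ 2 ≤ 2 * m := by
      have := mul_neg_of_pos_of_neg hr₀ hCneg
      rw [hC, mul_sub, mul_div_cancel₀ _ hr₀.ne'] at this
      linarith
    rw [key]
    exact le_convex_combo_of_le hs
      (sub_sq_le_sq_of_nonneg_of_le_two_mul (by positivity) hX)

/-- Nonnegativity of the discriminant `QC + m²` for the orbit constants
`C = v₀² − 2m/r₀` and `Q = v₀²r₀²·sin²α₀`.  In particular `QC + m² ≥ 0` always, with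
`QC + m² ≥ (r₀v₀² − m)²` when `sin²α₀ = 1`, and also whenever `C < 0`. -/
theorem orbit_discriminant_nonneg
    (m r₀ v₀ α₀ C Q : ℝ) (hm : 0 < m) (hr₀ : 0 < r₀) (hv₀ : 0 < v₀)
    (hC : C = v₀ ^ 2 - 2 * m / r₀)
    (hQ : Q = v₀ ^ 2 * r₀ ^ 2 * Real.sin α₀ ^ 2) :
    Q * C + m ^ 2 ≥ 0 ∧
    (Real.sin α₀ ^ 2 = 1 → Q * C + m ^ 2 ≥ (r₀ * v₀ ^ 2 - m) ^ 2) ∧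
    (C < 0 → Q * C + m ^ 2 ≥ (r₀ * v₀ ^ 2 - m) ^ 2 ∧ (r₀ * v₀ ^ 2 - m) ^ 2 ≥ 0) :=
  orbit_discriminant_nonneg_general m r₀ v₀ α₀ C Q hr₀ hC hQ
end

section
/- Suppose a planar orbit satisfies csc²α = (C/Q)r² + (2m/Q)r with Q = r₀²v₀²sin²α₀ > 0, C = v₀² − 2m/r₀, m > 0, and QC + m² > 0. Then there is a unique pair (e, d) with e > 0, d > 0 such that (e² − 1)/(e²d²) = C/Q and 2/(ed) = 2m/Q, namely e = √(QC + m²)/m and d = Q/√(QC + m²). Consequently the orbit equation coincides with that of the conic of eccentricity e and focus-directrix distance d. -/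
/-!
The second equation says `e * d * m = Q`, i.e. it fixes the semi-latus rectum `e * d = Q / m`.
Substituting `e²d² = Q²/m²` into the first turns it into `(e m)² = Q C + m²`, so `e m` is the
positive square root of the discriminant, and then `d = Q / (e m)`.
-/

lemma two_div_mul_eq_two_mul_div_iff {e d m Q : ℝ} (hed : e * d ≠ 0) (hQ : Q ≠ 0) :
    2 / (e * d) = 2 * m / Q ↔ e * d * m = Q := by
  rw [div_eq_div_iff hed hQ]
  constructor <;> intro h <;> linarith

lemma sub_one_div_sq_eq_div_iff {e d m C Q : ℝ} (hedm : e * d * m = Q) (hQ : Q ≠ 0) :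
    (e ^ 2 - 1) / (e ^ 2 * d ^ 2) = C / Q ↔ (e * m) ^ 2 = Q * C + m ^ 2 := by
  have hm : m ≠ 0 := by rintro rfl; simp_all
  have hed : e * d ≠ 0 := by rintro h; simp_all
  have hsq : e ^ 2 * d ^ 2 = Q ^ 2 / m ^ 2 := by rw [← hedm]; field_simp
  rw [hsq, div_div_eq_mul_div, div_eq_div_iff (by positivity) hQ]
  constructor <;> intro h
  · have h' : ((e ^ 2 - 1) * m ^ 2 - C * Q) * Q = 0 := by linear_combination h
    linear_combination (mul_eq_zero.1 h').resolve_right hQ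
  · linear_combination Q * h

lemma conic_equations_iff {e d m C Q : ℝ} (he : e ≠ 0) (hd : d ≠ 0) (hQ : Q ≠ 0) :
    ((e ^ 2 - 1) / (e ^ 2 * d ^ 2) = C / Q ∧ 2 / (e * d) = 2 * m / Q) ↔
      ((e * m) ^ 2 = Q * C + m ^ 2 ∧ e * d * m = Q) := by
  rw [two_div_mul_eq_two_mul_div_iff (mul_ne_zero he hd) hQ]
  exact and_congr_left fun hedm => sub_one_div_sq_eq_div_iff hedm hQ

theorem orbit_conic_unique_general
    (m C Q : ℝ) (hm : 0 < m) (hQpos : 0 < Q)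
    (hdisc : 0 < Q * C + m ^ 2) :
    ∀ e d : ℝ,
      (0 < e ∧ 0 < d ∧
        (e ^ 2 - 1) / (e ^ 2 * d ^ 2) = C / Q ∧
        2 / (e * d) = 2 * m / Q)
      ↔ (e = Real.sqrt (Q * C + m ^ 2) / m ∧ d = Q / Real.sqrt (Q * C + m ^ 2)) := by
  intro e d
  have hs : 0 < Real.sqrt (Q * C + m ^ 2) := Real.sqrt_pos.2 hdisc
  rw [eq_div_iff hm.ne', eq_div_iff hs.ne']
  constructor
  · rintro ⟨he, hd, hconic⟩
    obtain ⟨hsq, hedm⟩ := (conic_equations_iff he.ne' hd.ne' hQpos.ne').1 hconic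
    have hem : e * m = Real.sqrt (Q * C + m ^ 2) := by
      rw [← hsq, Real.sqrt_sq (by positivity)]
    exact ⟨hem, by rw [← hem, ← hedm]; ring⟩
  · rintro ⟨hem, hds⟩
    have he : 0 < e := pos_of_mul_pos_left (by rwa [hem]) hm.le
    have hd : 0 < d := pos_of_mul_pos_left (by rwa [hds]) hs.le
    refine ⟨he, hd, (conic_equations_iff he.ne' hd.ne' hQpos.ne').2 ⟨?_, ?_⟩⟩
    · rw [hem, Real.sq_sqrt hdisc.le]
    · rw [← hds, ← hem]; ring

/-- Uniqueness of the conic matching the orbit equation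
`csc²α = (C/Q)r² + (2m/Q)r`.  Given `m > 0`, `Q = r₀²v₀²sin²α₀ > 0`,
`C = v₀² − 2m/r₀` and `QC + m² > 0`, a pair `(e, d)` with `e, d > 0` satisfies
`(e² − 1)/(e²d²) = C/Q` and `2/(ed) = 2m/Q` if and only if
`e = √(QC + m²)/m` and `d = Q/√(QC + m²)`.  In particular there is exactly one such
pair, so the orbit equation coincides with the focus-directrix conic equation of
eccentricity `e` and focus-directrix distance `d`. -/
theorem orbit_conic_unique
    (m r₀ v₀ α₀ C Q : ℝ) (hm : 0 < m) (hr₀ : 0 < r₀) (hv₀ : 0 < v₀)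
    (hC : C = v₀ ^ 2 - 2 * m / r₀)
    (hQ : Q = r₀ ^ 2 * v₀ ^ 2 * Real.sin α₀ ^ 2) (hQpos : 0 < Q)
    (hdisc : 0 < Q * C + m ^ 2) :
    ∀ e d : ℝ,
      (0 < e ∧ 0 < d ∧
        (e ^ 2 - 1) / (e ^ 2 * d ^ 2) = C / Q ∧
        2 / (e * d) = 2 * m / Q)
      ↔ (e = Real.sqrt (Q * C + m ^ 2) / m ∧ d = Q / Real.sqrt (Q * C + m ^ 2)) :=
  orbit_conic_unique_general m C Q hm hQpos hdisc
end
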